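/- Let A, B, C, D ∈ 𝔠 with A ≠ B and C ≠ D, and suppose B − A and D − C are linearly independent over ℝ (so that lines AB and CD are not parallel). If S ∈ ℂ lies on line AB and on line CD, then S ∈ 𝔠. In other words, the intersection point of two non-parallel lines through compass-constructable points is compass-constructable. -/

import Mathlib

/-!
Invert in a circle centred at a constructible point `O` lying on neither line. A line not
through `O` is mapped into the circle through `O` centred at the inverse of the reflection of
`O` in the line, so the inverse of `S` lies on two such circles. Their centres are
constructible and distinct (the lines are not parallel), hence so is the inverse of `S`, and
inverting back gives `S`. Reflection in a line, doubling (three rotations by `60°`) and inversion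
are the classical Mohr–Mascheroni constructions; `O` can be taken among five sixth roots of
unity, since a line meets the unit circle in at most two points.
-/

/-- The set 𝔠 of compass-constructable points in the plane ℂ: the smallest set
containing 0 and 1 and closed under taking intersection points of two distinct
circles whose centers and radius-defining points are constructable. -/
inductive Compass : ℂ → Prop
  | zero : Compass 0
  | one : Compass 1
  | circle_circle (a b c d z : ℂ) :
      Compass a → Compass b → Compass c → Compass d →
      ‖z - a‖ = ‖b - a‖ →
      ‖z - c‖ = ‖d - c‖ →
      {w : ℂ | ‖w - a‖ = ‖b - a‖} ≠
        {w : ℂ | ‖w - c‖ = ‖d - c‖} →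
      Compass z

open EuclideanGeometry AffineMap Metric

namespace EuclideanGeometry

variable {V P : Type*} [NormedAddCommGroup V] [InnerProductSpace ℝ V] [MetricSpace P]
  [NormedAddTorsor V P]

theorem inversion_homothety (c : P) (R t : ℝ) (x : P) :
    inversion c R (homothety c t x) = homothety c t⁻¹ (inversion c R x) := by
  rcases eq_or_ne t 0 with rfl | ht
  · simp
  rcases eq_or_ne x c with rfl | hx
  · simp
  rw [inversion, inversion, dist_homothety_center, homothety_apply, homothety_apply, vadd_vsub,
    vadd_vsub, smul_smul, smul_smul, Real.norm_eq_abs, dist_comm c]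
  congr 2
  field_simp
  rw [sq_abs]

theorem dist_inversion_inversion_reflection {s : AffineSubspace ℝ P} [Nonempty s]
    [s.direction.HasOrthogonalProjection] {c x : P} (hx : x ∈ s) (hc : c ∉ s) (R : ℝ) :
    dist (inversion c R x) (inversion c R (reflection s c)) =
      dist c (inversion c R (reflection s c)) := by
  have hxc : x ≠ c := fun h => hc (h ▸ hx)
  have hMc : reflection s c ≠ c := fun h => hc ((reflection_eq_self_iff c).mp h)
  rw [dist_inversion_inversion hxc hMc, dist_center_inversion, dist_reflection_eq_of_mem s hx,
    dist_comm c]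
  field_simp [dist_ne_zero.mpr hxc]

theorem Cospherical.encard_inter_line_le_two {s : Set P} (hs : Cospherical s) (A B : P) :
    (s ∩ line[ℝ, A, B]).encard ≤ 2 := by
  by_contra! h
  obtain ⟨t, hts, ht⟩ := Set.exists_subset_encard_eq (Order.add_one_le_of_lt h)
  obtain ⟨x, y, z, hxy, hxz, hyz, rfl⟩ := Set.encard_eq_three.mp ht
  have hline : ∀ p ∈ ({x, y, z} : Set P), p ∈ line[ℝ, A, B] := fun p hp => (hts hp).2
  have hind := Cospherical.affineIndependent_of_ne
    (hs.subset fun p hp => (hts hp).1) hxy hxz hyz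
  exact affineIndependent_iff_not_collinear_set.mp hind <|
    collinear_triple_of_mem_affineSpan_pair (hline x (by simp)) (hline y (by simp))
      (hline z (by simp))

theorem Cospherical.exists_notMem_line_notMem_line {s : Set P} (hs : Cospherical s)
    (h : 4 < s.encard) (A B C D : P) :
    ∃ p ∈ s, p ∉ line[ℝ, A, B] ∧ p ∉ line[ℝ, C, D] := by
  by_contra! hcover
  have hsub : s ⊆ (s ∩ line[ℝ, A, B]) ∪ (s ∩ line[ℝ, C, D]) := fun p hp => by
    by_cases hp₁ : p ∈ line[ℝ, A, B]
    · exact Or.inl ⟨hp, hp₁⟩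
    · exact Or.inr ⟨hp, hcover p hp hp₁⟩
  have : s.encard ≤ 2 + 2 := calc
    s.encard ≤ (s ∩ line[ℝ, A, B]).encard + (s ∩ line[ℝ, C, D]).encard :=
      (Set.encard_le_encard hsub).trans (Set.encard_union_le _ _)
    _ ≤ 2 + 2 := add_le_add (hs.encard_inter_line_le_two A B) (hs.encard_inter_line_le_two C D)
  exact h.not_ge this

theorem reflection_ne_reflection_of_linearIndependent [FiniteDimensional ℝ V]
    (hV : Module.finrank ℝ V = 2) {A B C D c : P}
    (hind : LinearIndependent ℝ ![B -ᵥ A, D -ᵥ C]) (hc : c ∉ line[ℝ, A, B]) :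
    reflection line[ℝ, A, B] c ≠ reflection line[ℝ, C, D] c := by
  -- A common reflection `M ≠ c` makes `A, B, C, D` equidistant from `c` and `M`, so the
  -- independent directions `B -ᵥ A`, `D -ᵥ C` are orthogonal to `M -ᵥ c`: impossible in a plane.
  intro h
  set M := reflection line[ℝ, A, B] c
  have hMc : M ≠ c := fun h' => hc ((reflection_eq_self_iff c).mp h')
  have hequi : ∀ {X : P} {s : AffineSubspace ℝ P} [Nonempty s]
      [s.direction.HasOrthogonalProjection], X ∈ s → M = reflection s c →
      dist c X = dist M X :=
    fun hX hMs => by rw [hMs, dist_comm (reflection _ c), dist_reflection_eq_of_mem _ hX, dist_comm]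
  have hperp : ∀ {X Y : P} {s : AffineSubspace ℝ P} [Nonempty s]
      [s.direction.HasOrthogonalProjection], X ∈ s → Y ∈ s → M = reflection s c →
      inner ℝ (Y -ᵥ X) (M -ᵥ c) = 0 := fun hX hY hMs =>
    inner_vsub_vsub_of_dist_eq_of_dist_eq (hequi hX hMs) (hequi hY hMs)
  have hle : Submodule.span ℝ (Set.range ![B -ᵥ A, D -ᵥ C]) ≤ (ℝ ∙ (M -ᵥ c))ᗮ := by
    rw [Submodule.span_le, Set.range_subset_iff, Fin.forall_fin_two]
    simp only [Matrix.cons_val_zero, Matrix.cons_val_one, SetLike.mem_coe,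
      Submodule.mem_orthogonal_singleton_iff_inner_left]
    exact ⟨hperp (left_mem_affineSpan_pair ℝ A B) (right_mem_affineSpan_pair ℝ A B) rfl,
      hperp (left_mem_affineSpan_pair ℝ C D) (right_mem_affineSpan_pair ℝ C D) h⟩
  rw [hind.span_eq_top_of_card_eq_finrank' (by simp [hV])] at hle
  have := hle (Submodule.mem_top (x := M -ᵥ c))
  rw [Submodule.mem_orthogonal_singleton_iff_inner_left, inner_self_eq_zero,
    vsub_eq_zero_iff_eq] at this
  exact hMc this

end EuclideanGeometry

theorem Metric.sphere_ne_sphere_of_ne {E : Type*} [NormedAddCommGroup E] [NormedSpace ℝ E]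
    {a c : E} {r s : ℝ} (hr : 0 < r) (hac : a ≠ c) : sphere a r ≠ sphere c s := by
  -- The two points of `sphere a r` on the line `ac` are at distances `d + r` and `|d - r|`
  -- from `c`.
  intro h
  set d := dist a c
  have hd : 0 < d := dist_pos.mpr hac
  have hdist : ∀ τ : ℝ, dist (a + τ • (a - c)) c = |(1 + τ) * d| := fun τ => by
    rw [dist_eq_norm,
      show a + τ • (a - c) - c = (1 + τ) • (a - c) by rw [add_smul, one_smul]; abel,
      norm_smul, Real.norm_eq_abs, ← dist_eq_norm, abs_mul, abs_of_pos hd]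
  have hmem : ∀ τ : ℝ, |τ| = r / d → dist (a + τ • (a - c)) c = s := fun τ hτ => by
    rw [← mem_sphere, ← h, mem_sphere, dist_eq_norm, add_sub_cancel_left, norm_smul,
      Real.norm_eq_abs, ← dist_eq_norm, hτ, div_mul_cancel₀ _ hd.ne']
  have h₁ := (hdist (r / d)).symm.trans (hmem _ (abs_of_pos (by positivity)))
  have h₂ := (hdist (-(r / d))).symm.trans (hmem _ (by rw [abs_neg, abs_of_pos (by positivity)]))
  rw [← h₂, show (1 + r / d) * d = d + r by field_simp,
    show (1 + -(r / d)) * d = d - r by field_simp; ring, abs_eq_abs] at h₁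
  rcases h₁ with h₁ | h₁ <;> linarith

open Complex Real ComplexConjugate

noncomputable def ζ₆ : ℂ := exp (2 * π * I / 6)

theorem isPrimitiveRoot_ζ₆ : IsPrimitiveRoot ζ₆ 6 := by
  simpa [ζ₆] using isPrimitiveRoot_exp 6 (by norm_num)

theorem norm_ζ₆ : ‖ζ₆‖ = 1 := isPrimitiveRoot_ζ₆.norm'_eq_one (by norm_num)

theorem ζ₆_pow_three : ζ₆ ^ 3 = -1 :=
  (isPrimitiveRoot_ζ₆.pow_of_dvd (by norm_num) (by norm_num : 3 ∣ 6)).eq_neg_one_of_two_right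

theorem ζ₆_sub_one : ζ₆ - 1 = ζ₆ ^ 2 := by
  have hne : ζ₆ + 1 ≠ 0 := fun h => isPrimitiveRoot_ζ₆.pow_ne_one_of_pos_of_lt two_ne_zero
    (by norm_num) (by rw [eq_neg_of_add_eq_zero_left h]; norm_num)
  have : (ζ₆ + 1) * (ζ₆ - 1 - ζ₆ ^ 2) = 0 := by linear_combination -ζ₆_pow_three
  linear_combination (mul_eq_zero.mp this).resolve_left hne

theorem norm_ζ₆_sub_one : ‖ζ₆ - 1‖ = 1 := by
  rw [ζ₆_sub_one, norm_pow, norm_ζ₆, one_pow]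

theorem exists_norm_eq_norm_sub_one_eq_one {t : ℝ} (ht₀ : 0 < t) (ht₂ : t < 2) :
    ∃ k : ℂ, ‖k‖ = t ∧ ‖k - 1‖ = 1 ∧ k.re = t ^ 2 / 2 ∧ k.im ≠ 0 := by
  have hs : √(1 - t ^ 2 / 4) ^ 2 = 1 - t ^ 2 / 4 := Real.sq_sqrt (by nlinarith)
  have hs₀ : 0 < √(1 - t ^ 2 / 4) := Real.sqrt_pos.mpr (by nlinarith)
  refine ⟨⟨t ^ 2 / 2, t * √(1 - t ^ 2 / 4)⟩, ?_, ?_, rfl, by positivity⟩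
  · refine (pow_left_inj₀ (norm_nonneg _) ht₀.le two_ne_zero).mp ?_
    rw [Complex.sq_norm, normSq_mk]
    linear_combination t ^ 2 * hs
  · refine (pow_left_inj₀ (norm_nonneg _) zero_le_one two_ne_zero).mp ?_
    rw [Complex.sq_norm, normSq_apply, sub_re, sub_im, one_re, one_im]
    linear_combination t ^ 2 * hs

namespace Compass

theorem of_dist_eq {a b c d z : ℂ} (ha : Compass a) (hb : Compass b) (hc : Compass c)
    (hd : Compass d) (hba : b ≠ a) (hac : a ≠ c) (hza : dist z a = dist b a)
    (hzc : dist z c = dist d c) : Compass z := by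
  refine circle_circle a b c d z ha hb hc hd ?_ ?_ ?_
  · rwa [← dist_eq_norm, ← dist_eq_norm]
  · rwa [← dist_eq_norm, ← dist_eq_norm]
  · simpa only [Metric.sphere, dist_eq_norm] using
      sphere_ne_sphere_of_ne (s := ‖d - c‖) (dist_pos.mpr hba) hac

theorem reflection {A B z : ℂ} (hA : Compass A) (hB : Compass B) (hz : Compass z)
    (hAB : A ≠ B) : Compass (reflection line[ℝ, A, B] z) := by
  by_cases hzl : z ∈ line[ℝ, A, B]
  · rwa [(reflection_eq_self_iff z).mpr hzl]
  have hdist : ∀ X ∈ line[ℝ, A, B],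
      dist (EuclideanGeometry.reflection line[ℝ, A, B] z) X = dist z X :=
    fun X hX => by rw [dist_comm, dist_reflection_eq_of_mem _ hX, dist_comm]
  exact of_dist_eq hA hz hB hz (fun h => hzl (h ▸ left_mem_affineSpan_pair ℝ A B)) hAB
    (hdist A (left_mem_affineSpan_pair ℝ A B)) (hdist B (right_mem_affineSpan_pair ℝ A B))

theorem add_ζ₆_mul_sub {p x : ℂ} (hp : Compass p) (hx : Compass x) :
    Compass (p + ζ₆ * (x - p)) := by
  rcases eq_or_ne x p with rfl | hxp
  · simpa using hp
  refine of_dist_eq hp hx hx hp hxp hxp.symm ?_ ?_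
  · rw [dist_eq_norm, dist_eq_norm, add_sub_cancel_left, norm_mul, norm_ζ₆, one_mul]
  · rw [dist_eq_norm, dist_eq_norm, show p + ζ₆ * (x - p) - x = (ζ₆ - 1) * (x - p) by ring,
      norm_mul, norm_ζ₆_sub_one, one_mul, norm_sub_rev]

theorem add_ζ₆_pow_mul_sub {p x : ℂ} (hp : Compass p) (hx : Compass x) :
    ∀ n : ℕ, Compass (p + ζ₆ ^ n * (x - p))
  | 0 => by simpa using hx
  | n + 1 => by
    convert add_ζ₆_mul_sub hp (add_ζ₆_pow_mul_sub hp hx n) using 1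
    ring

theorem ζ₆_pow (n : ℕ) : Compass (ζ₆ ^ n) := by
  simpa using add_ζ₆_pow_mul_sub zero one n

theorem homothety_two {c x : ℂ} (hc : Compass c) (hx : Compass x) :
    Compass (homothety c (2 : ℝ) x) := by
  convert add_ζ₆_pow_mul_sub hx hc 3 using 1
  rw [homothety_apply, ζ₆_pow_three, vsub_eq_sub, vadd_eq_add, real_smul]
  push_cast
  ring

theorem homothety_two_pow {c x : ℂ} (hc : Compass c) (hx : Compass x) :
    ∀ n : ℕ, Compass (homothety c ((2 : ℝ) ^ n) x)
  | 0 => by simpa using hx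
  | n + 1 => by
    rw [pow_succ', homothety_mul_apply]
    exact homothety_two hc (homothety_two_pow hc hx n)

theorem inversion_of_lt {O E X : ℂ} (hO : Compass O) (hE : Compass E) (hX : Compass X)
    (hEO : E ≠ O) (hfar : dist E O < 2 * dist X O) : Compass (inversion O (dist E O) X) := by
  -- The circle of inversion meets the circle about `X` through `O` in `U = O + k (X - O)` and
  -- `V = O + conj k (X - O)`; the circles about `U` and `V` through `O` meet again in the inverse.
  set R := dist E O
  set d := dist X O
  have hR : 0 < R := dist_pos.mpr hEO
  have hd : 0 < d := by linarith
  have hXO : X ≠ O := dist_pos.mp hd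
  obtain ⟨k, hk, hk₁, hkre, hkim⟩ :=
    exists_norm_eq_norm_sub_one_eq_one (div_pos hR hd) ((div_lt_iff₀ hd).mpr hfar)
  have hcircle : ∀ k' : ℂ, ‖k'‖ = R / d → ‖k' - 1‖ = 1 →
      Compass (O + k' * (X - O)) :=
    fun k' hk' hk'₁ => of_dist_eq hO hE hX hO hEO hXO.symm
      (by rw [dist_eq_norm, add_sub_cancel_left, norm_mul, hk', ← dist_eq_norm,
        div_mul_cancel₀ _ hd.ne'])
      (by rw [dist_eq_norm, show O + k' * (X - O) - X = (k' - 1) * (X - O) by ring, norm_mul,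
        hk'₁, one_mul, ← dist_eq_norm, dist_comm])
  have hU := hcircle k hk hk₁
  have hV := hcircle (conj k) (by rwa [norm_conj])
    (by rwa [← map_one (starRingEnd ℂ), ← map_sub, norm_conj])
  have hUO : O + k * (X - O) ≠ O := by
    simpa [sub_eq_zero, hXO] using fun h : k = 0 => hkim (by simp [h])
  have hUV : O + k * (X - O) ≠ O + conj k * (X - O) := by
    simpa [sub_eq_zero, hXO, Complex.ext_iff, eq_neg_iff_add_eq_zero, ← two_mul] using hkim
  have hinv : inversion O R X = O + (k + conj k) * (X - O) := by
    rw [add_conj, hkre, inversion, vsub_eq_sub, vadd_eq_add, real_smul, add_comm]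
    push_cast
    ring
  rw [hinv]
  refine of_dist_eq hU hO hV hO hUO.symm hUV ?_ ?_
  · rw [dist_eq_norm, dist_eq_norm, show O + (k + conj k) * (X - O) - (O + k * (X - O)) =
        conj k * (X - O) by ring, show O - (O + k * (X - O)) = -(k * (X - O)) by ring,
      norm_neg, norm_mul, norm_mul, norm_conj]
  · rw [dist_eq_norm, dist_eq_norm, show O + (k + conj k) * (X - O) - (O + conj k * (X - O)) =
        k * (X - O) by ring, show O - (O + conj k * (X - O)) = -(conj k * (X - O)) by ring,
      norm_neg, norm_mul, norm_mul, norm_conj]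

theorem inversion {O E X : ℂ} (hO : Compass O) (hE : Compass E) (hX : Compass X) :
    Compass (inversion O (dist E O) X) := by
  rcases eq_or_ne E O with rfl | hEO
  · simpa using hO
  rcases eq_or_ne X O with rfl | hXO
  · simpa using hO
  obtain ⟨n, hn⟩ := pow_unbounded_of_one_lt (dist E O / (2 * dist X O)) one_lt_two
  have hfar : dist E O < 2 * dist (homothety O ((2 : ℝ) ^ n) X) O := by
    rw [dist_homothety_center, Real.norm_eq_abs, abs_of_pos (by positivity), dist_comm O X]
    rw [div_lt_iff₀ (by positivity [dist_pos.mpr hXO])] at hn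
    linarith
  have := homothety_two_pow hO (inversion_of_lt hO hE (homothety_two_pow hO hX n) hEO hfar) n
  rwa [inversion_homothety, ← homothety_mul_apply, mul_inv_cancel₀ (by positivity),
    homothety_one] at this

end Compass

theorem exists_ζ₆_pow_notMem_line_notMem_line (A B C D : ℂ) :
    ∃ n, ζ₆ ^ n ∉ line[ℝ, A, B] ∧ ζ₆ ^ n ∉ line[ℝ, C, D] := by
  have hcosph : Cospherical ((ζ₆ ^ ·) '' {i | i < 5}) :=
    ⟨0, 1, by rintro _ ⟨n, -, rfl⟩; simp [norm_ζ₆]⟩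
  have hinj : Set.InjOn (ζ₆ ^ ·) {i | i < 5} := fun i hi j hj h =>
    isPrimitiveRoot_ζ₆.pow_inj (by simp at hi; omega) (by simp at hj; omega) h
  obtain ⟨_, ⟨n, -, rfl⟩, h⟩ := hcosph.exists_notMem_line_notMem_line
    (by rw [hinj.encard_image, Set.Nat.encard_range]; norm_num) A B C D
  exact ⟨n, h⟩

/-- The intersection point of two non-parallel lines, each through two
compass-constructable points, is compass-constructable. -/
theorem line_line_inter_constructable (A B C D : ℂ)
    (hA : Compass A) (hB : Compass B) (hC : Compass C) (hD : Compass D)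
    (hAB : A ≠ B) (hCD : C ≠ D)
    (hpar : LinearIndependent ℝ ![B - A, D - C])
    (S : ℂ) (hS₁ : S ∈ affineSpan ℝ ({A, B} : Set ℂ))
    (hS₂ : S ∈ affineSpan ℝ ({C, D} : Set ℂ)) :
    Compass S := by
  obtain ⟨n, hO₁, hO₂⟩ := exists_ζ₆_pow_notMem_line_notMem_line A B C D
  set O := ζ₆ ^ n
  have hO : Compass O := Compass.ζ₆_pow n
  have hR : dist 0 O ≠ 0 := by simp [O, norm_ζ₆]
  have hP₁ := Compass.inversion hO Compass.zero (Compass.reflection hA hB hO hAB)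
  have hP₂ := Compass.inversion hO Compass.zero (Compass.reflection hC hD hO hCD)
  have hP₁O : inversion O (dist 0 O) (reflection line[ℝ, A, B] O) ≠ O := by
    rwa [Ne, inversion_eq_center hR, reflection_eq_self_iff]
  have hP₁₂ := (inversion_injective O hR).ne
    (reflection_ne_reflection_of_linearIndependent Complex.finrank_real_complex hpar hO₁)
  have hS' : Compass (inversion O (dist 0 O) S) :=
    Compass.of_dist_eq hP₁ hO hP₂ hO hP₁O.symm hP₁₂
      (dist_inversion_inversion_reflection hS₁ hO₁ _)
      (dist_inversion_inversion_reflection hS₂ hO₂ _)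
  simpa only [inversion_inversion O hR] using Compass.inversion hO Compass.zero hS'
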